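/- arXiv:0909.4021 — 8 statements merged into one kernel-verified Lean document; each statement's English description precedes it below -/
import Mathlib

section
/- Let G=(V,E) with U⊆V and capacity function c. Let S⊆V with U⊆S be a capacitated dominating set with dominating function f_S satisfying |f_S⁻¹(v)|≤1 for all v∈V∖U. Then the auxiliary bipartite-like graph G' (with c(u) copies of each u∈U, edges from copies of u∈U to neighbours v∉U, and edges vw for v,w∉U with vw∈E and c(v)+c(w)>0) contains a matching M with |V| − |M| = |S|. -/
/-!
Match every `v ∉ S` with the vertex of `G'` standing for its dominator `f v`: if `f v ∈ U`, the
copy of `f v` whose index is the position of `v` among the vertices dominated by `f v` (there are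
at most `c (f v)` of them); otherwise `f v` itself, which dominates no vertex but `v`. Dominators
lie in `S`, so these `|V| - |S|` edges are pairwise disjoint, and `c (f v) ≥ 1` makes `v (f v)` an
edge of `G'` also when both ends lie outside `U`.
-/

open Finset

/-- The vertex set of the auxiliary graph `G'`: one vertex for each `v ∉ U`,
and `c u` copies of each `u ∈ U`. -/
def AuxVert {V : Type*} [DecidableEq V] (U : Finset V) (c : V → ℕ) : Type _ :=
  {v : V // v ∉ U} ⊕ (Σ u : {u : V // u ∈ U}, Fin (c u.1))

/-- The auxiliary graph `G'`: copies of `u ∈ U` are joined to `v ∉ U` iff `uv ∈ E`;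
for `v, w ∉ U`, `vw ∈ E'` iff `vw ∈ E` and `c v + c w > 0`; no edges between
copies of vertices of `U`. -/
def auxGraph {V : Type*} [DecidableEq V] (G : SimpleGraph V) (U : Finset V) (c : V → ℕ) :
    SimpleGraph (AuxVert U c) where
  Adj x y :=
    match x, y with
    | Sum.inl v, Sum.inl w => G.Adj v.1 w.1 ∧ 0 < c v.1 + c w.1
    | Sum.inl v, Sum.inr ⟨u, _⟩ => G.Adj u.1 v.1
    | Sum.inr ⟨u, _⟩, Sum.inl v => G.Adj u.1 v.1
    | Sum.inr _, Sum.inr _ => False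
  symm := by
    constructor
    rintro (v | ⟨u, i⟩) (w | ⟨u', j⟩) h
    · exact ⟨h.1.symm, by omega⟩
    · exact h
    · exact h
    · exact h
  loopless := by
    constructor
    rintro (v | ⟨u, i⟩) h
    · exact G.loopless.irrefl v.1 h.1
    · exact h

namespace SimpleGraph

variable {W ι : Type*} {H : SimpleGraph W}

theorem exists_isMatching_ncard_edgeSet_eq {a b : ι → W} (ha : a.Injective) (hb : b.Injective)
    (hab : ∀ i j, a i ≠ b j) (hadj : ∀ i, H.Adj (a i) (b i)) :
    ∃ M : H.Subgraph, M.IsMatching ∧ M.edgeSet.ncard = Nat.card ι := by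
  refine ⟨⨆ i, H.subgraphOfAdj (hadj i), ?_, ?_⟩
  · refine Subgraph.IsMatching.iSup (fun i => .subgraphOfAdj _) fun i j hij => ?_
    simp only [support_subgraphOfAdj, Set.disjoint_insert_left, Set.disjoint_insert_right,
      Set.disjoint_singleton, Set.mem_insert_iff, Set.mem_singleton_iff, not_or]
    exact ⟨⟨(ha.ne hij).symm, hab j i⟩, hab i j, hb.ne hij⟩
  · have hinj : Function.Injective fun i => s(a i, b i) := fun i j hij => by
      rcases Sym2.eq_iff.mp hij with ⟨h, -⟩ | ⟨h, -⟩
      · exact ha h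
      · exact absurd h (hab i j)
    rw [← Set.ncard_range_of_injective hinj]
    congr 1
    ext e
    simp [eq_comm]

end SimpleGraph

theorem Finset.exists_index_lt_of_card_fiber_le {α β : Type*} [DecidableEq β] (s : Finset α)
    (f : α → β) (c : β → ℕ) (hc : ∀ a ∈ s, #{x ∈ s | f x = f a} ≤ c (f a)) :
    ∃ idx : α → ℕ, (∀ a ∈ s, idx a < c (f a)) ∧
      Set.InjOn (fun a => (f a, idx a)) s := by
  classical
  refine ⟨fun a => (s.filter (f · = f a)).toList.idxOf a, fun a ha => ?_, ?_⟩
  · refine lt_of_lt_of_le ?_ (hc a ha)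
    rw [← length_toList, List.idxOf_lt_length_iff, mem_toList]
    simp [ha]
  · intro a ha a' ha' h
    obtain ⟨hf, hidx⟩ := Prod.mk.inj h
    dsimp only at hidx
    rw [hf] at hidx
    exact (List.idxOf_inj (by simpa [hf] using ha)).mp hidx

namespace AuxVert

variable {V : Type*} [DecidableEq V] {U : Finset V} {c : V → ℕ}

def copy (w : V) (i : ℕ) (hi : w ∈ U → i < c w) : AuxVert U c :=
  if hw : w ∈ U then .inr ⟨⟨w, hw⟩, ⟨i, hi hw⟩⟩ else .inl ⟨w, hw⟩

theorem copy_of_mem {w : V} {i : ℕ} {hi : w ∈ U → i < c w} (hw : w ∈ U) :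
    copy w i hi = .inr ⟨⟨w, hw⟩, ⟨i, hi hw⟩⟩ :=
  dif_pos hw

theorem copy_of_notMem {w : V} {i : ℕ} {hi : w ∈ U → i < c w} (hw : w ∉ U) :
    copy w i hi = .inl ⟨w, hw⟩ :=
  dif_neg hw

theorem eq_of_copy_eq_inl {w : V} {i : ℕ} {hi : w ∈ U → i < c w} {x : {v : V // v ∉ U}}
    (h : copy w i hi = .inl x) : w = x.1 := by
  by_cases hw : w ∈ U
  · rw [copy_of_mem hw] at h
    cases h
  · rw [copy_of_notMem hw] at h
    cases h
    rfl

theorem eq_of_copy_eq {w w' : V} {i i' : ℕ} {hi : w ∈ U → i < c w}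
    {hi' : w' ∈ U → i' < c w'}
    (h : copy w i hi = copy w' i' hi') : w = w' ∧ (w ∈ U → i = i') := by
  by_cases hw : w ∈ U <;> by_cases hw' : w' ∈ U
  · rw [copy_of_mem hw, copy_of_mem hw'] at h
    cases h
    exact ⟨rfl, fun _ => rfl⟩
  · rw [copy_of_mem hw, copy_of_notMem hw'] at h
    cases h
  · rw [copy_of_notMem hw, copy_of_mem hw'] at h
    cases h
  · rw [copy_of_notMem hw, copy_of_notMem hw'] at h
    cases h
    exact ⟨rfl, fun h => (hw h).elim⟩

end AuxVert

theorem auxGraph_adj_inl_copy {V : Type*} [DecidableEq V] {G : SimpleGraph V} {U : Finset V}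
    {c : V → ℕ} {v w : V} (hv : v ∉ U) (hvw : G.Adj v w) (hw : 0 < c w) {i : ℕ}
    (hi : w ∈ U → i < c w) : (auxGraph G U c).Adj (.inl ⟨v, hv⟩) (AuxVert.copy w i hi) := by
  by_cases hwU : w ∈ U
  · rw [AuxVert.copy_of_mem hwU]
    exact hvw.symm
  · rw [AuxVert.copy_of_notMem hwU]
    exact ⟨hvw, Nat.add_pos_right _ hw⟩

theorem stmt_1_general {V : Type*} [Fintype V] [DecidableEq V]
    (G : SimpleGraph V)
    (U : Finset V) (c : V → ℕ) (S : Finset V) (f : V → V)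
    (hUS : U ⊆ S)
    (hf : ∀ v, v ∉ S → f v ∈ S ∧ G.Adj v (f v))
    (hcap : ∀ w ∈ S, (univ.filter (fun v => v ∉ S ∧ f v = w)).card ≤ c w)
    (hsimp : ∀ w, w ∉ U → (univ.filter (fun v => v ∉ S ∧ f v = w)).card ≤ 1) :
    ∃ M : SimpleGraph.Subgraph (auxGraph G U c),
      M.IsMatching ∧ Fintype.card V = M.edgeSet.ncard + S.card := by
  have hfiber : ∀ v ∉ S, v ∈ univ.filter (fun x => x ∉ S ∧ f x = f v) := by simp
  have hcap_pos : ∀ v ∉ S, 0 < c (f v) := fun v hv =>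
    (card_pos.mpr ⟨v, hfiber v hv⟩).trans_le (hcap _ (hf v hv).1)
  obtain ⟨idx, hidx, hinj⟩ :=
      (univ.filter (· ∉ S)).exists_index_lt_of_card_fiber_le f c fun v hv => by
    simpa only [filter_filter] using hcap _ (hf v (mem_filter.mp hv).2).1
  have hmem (v : {v // v ∉ S}) : (v : V) ∈ univ.filter (· ∉ S) := by simpa using v.2
  let partner (v : {v // v ∉ S}) : AuxVert U c :=
    AuxVert.copy (f v) (idx v) fun _ => hidx v (hmem v)
  have hpartner : partner.Injective := fun v w h => by
    obtain ⟨hvw, hi⟩ := AuxVert.eq_of_copy_eq h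
    by_cases hU : f v ∈ U
    · exact Subtype.ext <| hinj (hmem v) (hmem w) (by simp [hvw, hi hU])
    · exact Subtype.ext <| card_le_one.mp (hsimp _ hU) _ (hfiber v v.2) _ (hvw ▸ hfiber w w.2)
  obtain ⟨M, hM, hcard⟩ := SimpleGraph.exists_isMatching_ncard_edgeSet_eq (H := auxGraph G U c)
    (a := fun v : {v // v ∉ S} => (.inl ⟨v, fun h => v.2 (hUS h)⟩ : AuxVert U c))
    (fun v w h => Subtype.ext (Subtype.mk.inj (Sum.inl.inj h))) hpartner
    (fun v w h => v.2 (AuxVert.eq_of_copy_eq_inl h.symm ▸ (hf w w.2).1))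
    fun v => auxGraph_adj_inl_copy _ (hf v v.2).2 (hcap_pos v v.2) _
  refine ⟨M, hM, ?_⟩
  rw [hcard, Nat.card_eq_fintype_card, Fintype.card_subtype_compl, Fintype.card_coe]
  have := S.card_le_univ
  omega

/-- If `S ⊇ U` is a capacitated dominating set of `G` with dominating function `f`
such that every `v ∉ U` dominates at most one vertex, then the auxiliary graph
contains a matching `M` with `|V| - |M| = |S|`. -/
theorem stmt_1 {V : Type*} [Fintype V] [DecidableEq V]
    (G : SimpleGraph V) [DecidableRel G.Adj]
    (U : Finset V) (c : V → ℕ) (S : Finset V) (f : V → V)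
    (hUS : U ⊆ S)
    (hf : ∀ v, v ∉ S → f v ∈ S ∧ G.Adj v (f v))
    (hcap : ∀ w ∈ S, (univ.filter (fun v => v ∉ S ∧ f v = w)).card ≤ c w)
    (hsimp : ∀ w, w ∉ U → (univ.filter (fun v => v ∉ S ∧ f v = w)).card ≤ 1) :
    ∃ M : SimpleGraph.Subgraph (auxGraph G U c),
      M.IsMatching ∧ Fintype.card V = M.edgeSet.ncard + S.card :=
  stmt_1_general G U c S f hUS hf hcap hsimp
end

section
/- Let G=(V,E) with U⊆V and capacity function c, and let G' be the auxiliary graph as defined. For any matching M in G', there exists a capacitated dominating set S⊆V containing U with a dominating function f satisfying |f⁻¹(v)|≤1 for all v∈V∖U, such that |S| = |V| − |M|. -/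
/-!
Every edge of the matching `M` removes one vertex of `V ∖ U` from the dominating set and lets
the vertex underlying its partner dominate it. An end `v ∉ U` can be removed when its partner
is a copy of a vertex of `U`, or a vertex `w ∉ U` with `c w > 0`; the condition
`c v + c w > 0` on the edges of `G'` guarantees that one end qualifies. As `M` is a matching,
a partner is never removed itself, and distinct removed vertices have distinct partners: a
vertex `u ∈ U` dominates at most one removed vertex per copy, hence at most `c u`, and a vertex
`w ∉ U` at most one. So `S`, the set of vertices not removed, has `|V| - |M|` elements.
-/

open Finset

namespace SimpleGraph.Subgraph.IsMatching

variable {W : Type*} {H : SimpleGraph W} {M : H.Subgraph}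

open Classical in
/-- An unmatched vertex is its own partner. -/
noncomputable def partner (hM : M.IsMatching) (x : W) : W :=
  if hx : x ∈ M.verts then (hM hx).exists.choose else x

lemma partner_eq_of_adj (hM : M.IsMatching) {x y : W} (hxy : M.Adj x y) :
    hM.partner x = y := by
  have hx : x ∈ M.verts := M.edge_vert hxy
  rw [partner, dif_pos hx]
  exact hM.eq_of_adj_left (hM hx).exists.choose_spec hxy

lemma ncard_edgeSet_eq_ncard_sources (hM : M.IsMatching) {R : W → W → Prop}
    (hR : ∀ ⦃x y⦄, M.Adj x y → (R x y ↔ ¬ R y x)) :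
    M.edgeSet.ncard = {x | ∃ y, M.Adj x y ∧ R x y}.ncard := by
  symm
  refine Set.ncard_congr (fun x _ => s(x, hM.partner x)) ?_ ?_ ?_
  · rintro x ⟨y, hxy, -⟩
    rwa [hM.partner_eq_of_adj hxy]
  · rintro x x' ⟨y, hxy, hRxy⟩ ⟨y', hxy', hRxy'⟩ h
    rw [hM.partner_eq_of_adj hxy, hM.partner_eq_of_adj hxy'] at h
    rcases Sym2.eq_iff.mp h with ⟨rfl, -⟩ | ⟨rfl, rfl⟩
    · rfl
    · exact absurd hRxy' ((hR hxy).mp hRxy)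
  · intro e he
    induction e using Sym2.ind with
    | _ x y =>
      have hxy : M.Adj x y := he
      by_cases hRxy : R x y
      · exact ⟨x, ⟨y, hxy, hRxy⟩, by rw [hM.partner_eq_of_adj hxy]⟩
      · refine ⟨y, ⟨x, hxy.symm, (hR hxy.symm).mpr hRxy⟩, ?_⟩
        rw [hM.partner_eq_of_adj hxy.symm, Sym2.eq_swap]

end SimpleGraph.Subgraph.IsMatching

namespace AuxVert

variable {V : Type*} [DecidableEq V] {U : Finset V} {c : V → ℕ}

instance [Finite V] : Finite (AuxVert U c) := by
  unfold AuxVert; infer_instance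

def base : AuxVert U c → V
  | Sum.inl v => v.1
  | Sum.inr u => u.1.1

lemma eq_inl_of_base_notMem {x : AuxVert U c} (hx : x.base ∉ U) :
    x = Sum.inl ⟨x.base, hx⟩ := by
  rcases x with v | ⟨u, i⟩
  · rfl
  · exact absurd u.2 hx

lemma base_injOn : Set.InjOn base {x : AuxVert U c | x.base ∉ U} := by
  intro x hx y hy h
  rw [eq_inl_of_base_notMem hx, eq_inl_of_base_notMem hy]
  exact congrArg Sum.inl (Subtype.ext h)

lemma base_preimage_of_mem {w : V} (hw : w ∈ U) :
    base ⁻¹' {w} =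
      @Set.range (AuxVert U c) (Fin (c w)) (fun i => Sum.inr ⟨⟨w, hw⟩, i⟩) := by
  ext x
  refine ⟨fun hx => ?_, by rintro ⟨i, rfl⟩; rfl⟩
  rcases x with v | ⟨⟨u, hu⟩, i⟩
  · exact absurd (show v.1 = w from hx ▸ rfl) (fun h => v.2 (h ▸ hw))
  · obtain rfl : u = w := hx
    exact ⟨i, rfl⟩

lemma ncard_base_preimage_le [Finite V] (w : V) :
    (base ⁻¹' {w} : Set (AuxVert U c)).ncard ≤ if w ∈ U then c w else 1 := by
  split_ifs with hw
  · rw [base_preimage_of_mem hw]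
    have hinj : Function.Injective
        (fun i : Fin (c w) => (Sum.inr ⟨⟨w, hw⟩, i⟩ : AuxVert U c)) := fun i j h =>
      eq_of_heq (Sigma.mk.inj_iff.mp (Sum.inr_injective h)).2
    exact (Set.ncard_range_of_injective hinj).trans_le (Nat.card_fin _).le
  · rw [Set.ncard_le_one_iff_subsingleton]
    rintro x (rfl : x.base = w) y (hy : y.base = x.base)
    exact base_injOn hw (show y.base ∉ U by rwa [hy]) hy.symm

lemma adj_base {G : SimpleGraph V} {x y : AuxVert U c} (h : (auxGraph G U c).Adj x y) :
    G.Adj x.base y.base := by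
  rcases x with v | ⟨u, i⟩ <;> rcases y with w | ⟨u', j⟩
  · exact h.1
  · exact G.adj_symm h
  · exact h
  · exact h.elim

/-- Of a matched edge `xy` of `G'`, `Loses x y` selects the end `x` that leaves the dominating
set, to be dominated by `y`; ties are broken by an arbitrary well-order of `V`. -/
def Loses : AuxVert U c → AuxVert U c → Prop
  | Sum.inl _, Sum.inr _ => True
  | Sum.inl v, Sum.inl w => c w.1 ≠ 0 ∧ (c v.1 = 0 ∨ WellOrderingRel w.1 v.1)
  | Sum.inr _, _ => False

lemma base_notMem_of_loses {x y : AuxVert U c} (h : Loses x y) : x.base ∉ U := by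
  rcases x with v | ⟨u, i⟩
  · exact v.2
  · exact h.elim

lemma capacity_ne_zero_of_loses {x y : AuxVert U c} (h : Loses x y) (hy : y.base ∉ U) :
    c y.base ≠ 0 := by
  rcases x with v | ⟨u, i⟩ <;> rcases y with w | ⟨u', j⟩
  · exact h.1
  · exact absurd u'.2 hy
  · exact h.elim
  · exact h.elim

lemma loses_iff_not_loses {G : SimpleGraph V} {x y : AuxVert U c}
    (h : (auxGraph G U c).Adj x y) : Loses x y ↔ ¬ Loses y x := by
  rcases x with v | ⟨u, i⟩ <;> rcases y with w | ⟨u', j⟩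
  · obtain ⟨hvw, hc⟩ : G.Adj v.1 w.1 ∧ 0 < c v.1 + c w.1 := h
    have hc' : c v.1 ≠ 0 ∨ c w.1 ≠ 0 := by omega
    have htri := trichotomous_of WellOrderingRel v.1 w.1
    have hne : v.1 ≠ w.1 := G.ne_of_adj hvw
    have hasymm : ¬ (WellOrderingRel v.1 w.1 ∧ WellOrderingRel w.1 v.1) :=
      fun h => asymm_of WellOrderingRel h.1 h.2
    simp only [Loses]
    tauto
  · simp [Loses]
  · simp [Loses]
  · exact h.elim

section Removal

variable {G : SimpleGraph V} {M : (auxGraph G U c).Subgraph}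

variable (M) in
def removed : Set V := base '' {x | ∃ y, M.Adj x y ∧ Loses x y}

noncomputable def dominator (hM : M.IsMatching) (v : V) : V :=
  if hv : v ∉ U then (hM.partner (Sum.inl ⟨v, hv⟩)).base else v

lemma notMem_removed_of_mem {v : V} (hv : v ∈ U) : v ∉ removed M := by
  rintro ⟨x, ⟨y, -, hl⟩, rfl⟩
  exact base_notMem_of_loses hl hv

variable (hM : M.IsMatching)
include hM

lemma dominator_base {x y : AuxVert U c} (hxy : M.Adj x y) (hx : x.base ∉ U) :
    dominator hM x.base = y.base := by
  rw [dominator, dif_pos hx, ← eq_inl_of_base_notMem hx, hM.partner_eq_of_adj hxy]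

lemma ncard_removed : (removed M).ncard = M.edgeSet.ncard := by
  rw [removed, Set.InjOn.ncard_image, ← hM.ncard_edgeSet_eq_ncard_sources]
  · exact fun x y hxy => loses_iff_not_loses (M.adj_sub hxy)
  · exact base_injOn.mono fun x ⟨_, _, hl⟩ => base_notMem_of_loses hl

lemma adj_dominator {v : V} (hv : v ∈ removed M) : G.Adj v (dominator hM v) := by
  obtain ⟨x, ⟨y, hxy, hl⟩, rfl⟩ := hv
  rw [dominator_base hM hxy (base_notMem_of_loses hl)]
  exact adj_base (M.adj_sub hxy)

lemma dominator_notMem_removed {v : V} (hv : v ∈ removed M) : dominator hM v ∉ removed M := by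
  obtain ⟨x, ⟨y, hxy, hl⟩, rfl⟩ := hv
  rw [dominator_base hM hxy (base_notMem_of_loses hl)]
  rintro ⟨y', ⟨z, hy'z, hl'⟩, hbase⟩
  have hy' : y'.base ∉ U := base_notMem_of_loses hl'
  obtain rfl : y' = y := base_injOn hy' (show y.base ∉ U from hbase ▸ hy') hbase
  obtain rfl : z = x := hM.eq_of_adj_left hy'z hxy.symm
  exact (loses_iff_not_loses (M.adj_sub hxy)).mp hl hl'

lemma capacity_dominator_ne_zero {v : V} (hv : v ∈ removed M) (hU : dominator hM v ∉ U) :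
    c (dominator hM v) ≠ 0 := by
  obtain ⟨x, ⟨y, hxy, hl⟩, rfl⟩ := hv
  rw [dominator_base hM hxy (base_notMem_of_loses hl)] at hU ⊢
  exact capacity_ne_zero_of_loses hl hU

/-- Distinct removed vertices are dominated through distinct partners in `G'`, so they
inject into the copies of their common dominator. -/
lemma ncard_removed_inter_dominator_preimage_le [Finite V] (w : V) :
    (removed M ∩ dominator hM ⁻¹' {w}).ncard ≤ if w ∈ U then c w else 1 := by
  set A := {x | ∃ y, M.Adj x y ∧ Loses x y ∧ y.base = w}
  have hsub : removed M ∩ dominator hM ⁻¹' {w} ⊆ base '' A := by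
    rintro _ ⟨⟨x, ⟨y, hxy, hl⟩, rfl⟩, hw⟩
    rw [Set.mem_preimage, dominator_base hM hxy (base_notMem_of_loses hl)] at hw
    exact ⟨x, ⟨y, hxy, hl, hw⟩, rfl⟩
  have hA : A.ncard ≤ (base ⁻¹' {w} : Set (AuxVert U c)).ncard := by
    refine Set.ncard_le_ncard_of_injOn hM.partner ?_ ?_
    · rintro x ⟨y, hxy, -, hw⟩
      rwa [hM.partner_eq_of_adj hxy]
    · rintro x ⟨y, hxy, -⟩ x' ⟨y', hx'y', -⟩ h
      rw [hM.partner_eq_of_adj hxy, hM.partner_eq_of_adj hx'y'] at h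
      subst h
      exact hM.eq_of_adj_right hxy hx'y'
  calc _ ≤ (base '' A).ncard := Set.ncard_le_ncard hsub
    _ ≤ A.ncard := Set.ncard_image_le
    _ ≤ (base ⁻¹' {w} : Set (AuxVert U c)).ncard := hA
    _ ≤ _ := ncard_base_preimage_le w

lemma ncard_removed_inter_dominator_preimage_le_capacity [Finite V] (w : V) :
    (removed M ∩ dominator hM ⁻¹' {w}).ncard ≤ c w := by
  have hle := ncard_removed_inter_dominator_preimage_le hM w
  by_cases hw : w ∈ U
  · simpa only [hw, if_true] using hle
  rcases Set.eq_empty_or_nonempty (removed M ∩ dominator hM ⁻¹' {w}) with h | ⟨v, hv, rfl⟩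
  · simp [h]
  · have := capacity_dominator_ne_zero hM hv hw
    simp only [hw, if_false] at hle
    omega

end Removal

end AuxVert

theorem stmt_2_general {V : Type*} [Fintype V] [DecidableEq V]
    (G : SimpleGraph V)
    (U : Finset V) (c : V → ℕ)
    (M : SimpleGraph.Subgraph (auxGraph G U c)) (hM : M.IsMatching) :
    ∃ (S : Finset V) (f : V → V),
      U ⊆ S ∧
      (∀ v, v ∉ S → f v ∈ S ∧ G.Adj v (f v)) ∧
      (∀ w ∈ S, (Finset.univ.filter (fun v => v ∉ S ∧ f v = w)).card ≤ c w) ∧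
      (∀ w, w ∉ U → (Finset.univ.filter (fun v => v ∉ S ∧ f v = w)).card ≤ 1) ∧
      Fintype.card V = M.edgeSet.ncard + S.card := by
  classical
  set S := (AuxVert.removed M)ᶜ.toFinset
  have hpreimage : ∀ w, (univ.filter fun v => v ∉ S ∧ AuxVert.dominator hM v = w).card =
      (AuxVert.removed M ∩ AuxVert.dominator hM ⁻¹' {w}).ncard := fun w => by
    rw [← Set.ncard_coe_finset]
    congr 1
    ext v
    simp [S]
  refine ⟨S, AuxVert.dominator hM, fun v hv => ?_, fun v hv => ?_, fun w _ => ?_,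
    fun w hw => ?_, ?_⟩
  · simpa [S] using AuxVert.notMem_removed_of_mem hv
  · simp only [S, Set.mem_toFinset, Set.mem_compl_iff, not_not] at hv ⊢
    exact ⟨AuxVert.dominator_notMem_removed hM hv, AuxVert.adj_dominator hM hv⟩
  · rw [hpreimage]
    exact AuxVert.ncard_removed_inter_dominator_preimage_le_capacity hM w
  · simpa [hpreimage, hw] using AuxVert.ncard_removed_inter_dominator_preimage_le hM w
  · rw [← AuxVert.ncard_removed hM, ← Nat.card_eq_fintype_card,
      ← Set.ncard_add_ncard_compl (AuxVert.removed M), Set.ncard_eq_toFinset_card' _ᶜ]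

/-- For any matching `M` in the auxiliary graph `G'`, there is a capacitated
dominating set `S ⊇ U` of `G` with dominating function `f` such that every
`v ∉ U` dominates at most one vertex, and `|S| = |V| - |M|`. -/
theorem stmt_2 {V : Type*} [Fintype V] [DecidableEq V]
    (G : SimpleGraph V) [DecidableRel G.Adj]
    (U : Finset V) (c : V → ℕ)
    (M : SimpleGraph.Subgraph (auxGraph G U c)) (hM : M.IsMatching) :
    ∃ (S : Finset V) (f : V → V),
      U ⊆ S ∧
      (∀ v, v ∉ S → f v ∈ S ∧ G.Adj v (f v)) ∧
      (∀ w ∈ S, (Finset.univ.filter (fun v => v ∉ S ∧ f v = w)).card ≤ c w) ∧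
      (∀ w, w ∉ U → (Finset.univ.filter (fun v => v ∉ S ∧ f v = w)).card ≤ 1) ∧
      Fintype.card V = M.edgeSet.ncard + S.card :=
  stmt_2_general G U c M hM
end

section
/- Let H=(V∪V', F) be the bipartite graph arising from G=(V,E) where V' is a disjoint copy of V and {u,v'}∈F iff uv∈E or u=v. If M⊆F is an independent set of edges in H (no two edges share an endpoint, and no edge of F∖M connects endpoints of two different edges of M), then S = W(M)∩V is an irredundant set in G with |S|=|M|. -/
open Finset

-- An edge `{u, v'}` of `H` is the pair `(u, v)`, so `M.image Prod.fst` is `W(M) ∩ V`.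

section MatchingEdges

variable {V : Type*} {M : Finset (V × V)}

lemma injOn_fst_of_fst_ne (hmatch : ∀ p ∈ M, ∀ q ∈ M, p ≠ q → p.1 ≠ q.1) :
    Set.InjOn Prod.fst (M : Set (V × V)) := fun p hp q hq hpq ↦
  of_not_not fun hne ↦ hmatch p hp q hq hne hpq

lemma dominates_snd_of_mem (G : SimpleGraph V) (hedge : ∀ p ∈ M, G.Adj p.1 p.2 ∨ p.1 = p.2)
    {p : V × V} (hp : p ∈ M) : p.2 = p.1 ∨ G.Adj p.1 p.2 :=
  (hedge p hp).symm.imp_left Eq.symm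

/-- The other end of an edge of `M` is a private neighbour of its first end. -/
lemma not_dominates_snd_of_ne_fst [DecidableEq V] (G : SimpleGraph V)
    (hindep : ∀ p ∈ M, ∀ q ∈ M, p ≠ q → ¬(G.Adj p.1 q.2 ∨ p.1 = q.2))
    {p : V × V} (hp : p ∈ M) {w : V} (hw : w ∈ M.image Prod.fst) (hwp : w ≠ p.1) :
    ¬(p.2 = w ∨ G.Adj w p.2) := by
  obtain ⟨q, hq, rfl⟩ := mem_image.mp hw
  have hqp : q ≠ p := fun h ↦ hwp (congrArg Prod.fst h)
  rintro (h | h)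
  · exact hindep q hq p hp hqp (Or.inr h.symm)
  · exact hindep q hq p hp hqp (Or.inl h)

end MatchingEdges

theorem stmt_3_general {V : Type*} [DecidableEq V]
    (G : SimpleGraph V)
    (M : Finset (V × V))
    (hedge : ∀ p ∈ M, G.Adj p.1 p.2 ∨ p.1 = p.2)
    (hmatch : ∀ p ∈ M, ∀ q ∈ M, p ≠ q → p.1 ≠ q.1 ∧ p.2 ≠ q.2)
    (hindep : ∀ p ∈ M, ∀ q ∈ M, p ≠ q → ¬(G.Adj p.1 q.2 ∨ p.1 = q.2)) :
    (M.image Prod.fst).card = M.card ∧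
    ∀ v ∈ M.image Prod.fst, ∃ u : V, (u = v ∨ G.Adj v u) ∧
      ∀ w ∈ M.image Prod.fst, w ≠ v → ¬(u = w ∨ G.Adj w u) := by
  refine ⟨card_image_of_injOn (injOn_fst_of_fst_ne fun p hp q hq hpq ↦ (hmatch p hp q hq hpq).1),
    ?_⟩
  intro v hv
  obtain ⟨p, hp, rfl⟩ := mem_image.mp hv
  exact ⟨p.2, dominates_snd_of_mem G hedge hp,
    fun w hw hwp ↦ not_dominates_snd_of_ne_fst G hindep hp hw hwp⟩

/-- In the bipartite graph `H` on `V ∪ V'` (edges `{u, v'}` iff `uv ∈ E` or `u = v`,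
here encoded as pairs `(u, v)`), if `M` is an independent set of edges (a matching
whose endpoint set is independent in `H` minus `M`), then `S = W(M) ∩ V` is an
irredundant set of `G` of cardinality `|M|`. -/
theorem stmt_3 {V : Type*} [Fintype V] [DecidableEq V]
    (G : SimpleGraph V)
    (M : Finset (V × V))
    (hedge : ∀ p ∈ M, G.Adj p.1 p.2 ∨ p.1 = p.2)
    (hmatch : ∀ p ∈ M, ∀ q ∈ M, p ≠ q → p.1 ≠ q.1 ∧ p.2 ≠ q.2)
    (hindep : ∀ p ∈ M, ∀ q ∈ M, p ≠ q → ¬(G.Adj p.1 q.2 ∨ p.1 = q.2)) :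
    (M.image Prod.fst).card = M.card ∧
    ∀ v ∈ M.image Prod.fst, ∃ u : V, (u = v ∨ G.Adj v u) ∧
      ∀ w ∈ M.image Prod.fst, w ≠ v → ¬(u = w ∨ G.Adj w u) :=
  stmt_3_general G M hedge hmatch hindep
end

section
/- Let H=(V∪V', F) be the bipartite graph arising from G=(V,E) as above. If S is an irredundant set in G, then there exists an independent set of edges M⊆F with W(M)∩V = S and |M|=|S|. -/
/-!
Pick for every `v ∈ S` a private neighbour `f v`: a vertex of `N̄(v)` outside `N̄(S ∖ {v})`.
The edges `v f(v)'` of `H` form the required matching, and privacy is exactly what forbids an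
edge of `H` between `v` and `f(w)'` for `v ≠ w`, which makes the matching induced.
-/

open Finset

section PrivateNeighbours

variable {V W : Type*} [DecidableEq V] [DecidableEq W] {R : V → W → Prop} {S : Finset V} {f : V → W}

lemma not_rel_of_mem_image_pair (hpriv : ∀ v ∈ S, ∀ w ∈ S, w ≠ v → ¬R w (f v))
    {p q : V × W} (hp : p ∈ S.image (fun v => (v, f v))) (hq : q ∈ S.image (fun v => (v, f v)))
    (hpq : p ≠ q) : ¬R p.1 q.2 := by
  obtain ⟨v, hv, rfl⟩ := mem_image.1 hp
  obtain ⟨w, hw, rfl⟩ := mem_image.1 hq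
  exact hpriv w hw v hv fun hvw => hpq (hvw ▸ rfl)

theorem exists_induced_matching_of_private (hrel : ∀ v ∈ S, R v (f v))
    (hpriv : ∀ v ∈ S, ∀ w ∈ S, w ≠ v → ¬R w (f v)) :
    ∃ M : Finset (V × W),
      (∀ p ∈ M, R p.1 p.2) ∧
      (∀ p ∈ M, ∀ q ∈ M, p ≠ q → p.1 ≠ q.1 ∧ p.2 ≠ q.2) ∧
      (∀ p ∈ M, ∀ q ∈ M, p ≠ q → ¬R p.1 q.2) ∧
      M.image Prod.fst = S ∧ M.card = S.card := by
  set M := S.image fun v => (v, f v)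
  have hrel' : ∀ p ∈ M, R p.1 p.2 := forall_mem_image.2 hrel
  refine ⟨M, hrel', fun p hp q hq hpq => ⟨?_, ?_⟩,
    fun p hp q hq => not_rel_of_mem_image_pair hpriv hp hq, ?_,
    card_image_of_injective _ fun _ _ h => congrArg Prod.fst h⟩
  · obtain ⟨v, -, rfl⟩ := mem_image.1 hp
    obtain ⟨w, -, rfl⟩ := mem_image.1 hq
    rintro (rfl : v = w)
    exact hpq rfl
  · intro h2
    exact not_rel_of_mem_image_pair hpriv hq hp (Ne.symm hpq) (h2 ▸ hrel' q hq)
  · rw [image_image]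
    exact image_id'

end PrivateNeighbours

-- The edge `{u, v'}` of `H` is encoded as the pair `(u, v)`.
theorem stmt_4_general {V : Type*} [DecidableEq V]
    (G : SimpleGraph V) (S : Finset V)
    (hS : ∀ v ∈ S, ∃ u : V, (u = v ∨ G.Adj v u) ∧
      ∀ w ∈ S, w ≠ v → ¬(u = w ∨ G.Adj w u)) :
    ∃ M : Finset (V × V),
      (∀ p ∈ M, G.Adj p.1 p.2 ∨ p.1 = p.2) ∧
      (∀ p ∈ M, ∀ q ∈ M, p ≠ q → p.1 ≠ q.1 ∧ p.2 ≠ q.2) ∧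
      (∀ p ∈ M, ∀ q ∈ M, p ≠ q → ¬(G.Adj p.1 q.2 ∨ p.1 = q.2)) ∧
      M.image Prod.fst = S ∧ M.card = S.card := by
  choose! f hrel hpriv using hS
  refine exists_induced_matching_of_private (R := fun v u => G.Adj v u ∨ v = u) (f := f)
    (fun v hv => ?_) fun v hv w hw hwv => ?_
  · simpa only [or_comm, eq_comm] using hrel v hv
  · simpa only [or_comm, eq_comm] using hpriv v hv w hw hwv

/-- If `S` is an irredundant set of `G`, then the bipartite graph `H` on `V ∪ V'`
(edges `{u, v'}` iff `uv ∈ E` or `u = v`, here encoded as pairs `(u, v)`) contains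
an independent set of edges `M` with `W(M) ∩ V = S` and `|M| = |S|`. -/
theorem stmt_4 {V : Type*} [Fintype V] [DecidableEq V]
    (G : SimpleGraph V) (S : Finset V)
    (hS : ∀ v ∈ S, ∃ u : V, (u = v ∨ G.Adj v u) ∧
      ∀ w ∈ S, w ≠ v → ¬(u = w ∨ G.Adj w u)) :
    ∃ M : Finset (V × V),
      (∀ p ∈ M, G.Adj p.1 p.2 ∨ p.1 = p.2) ∧
      (∀ p ∈ M, ∀ q ∈ M, p ≠ q → p.1 ≠ q.1 ∧ p.2 ≠ q.2) ∧
      (∀ p ∈ M, ∀ q ∈ M, p ≠ q → ¬(G.Adj p.1 q.2 ∨ p.1 = q.2)) ∧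
      M.image Prod.fst = S ∧ M.card = S.card :=
  stmt_4_general G S hS
end

section
/- For α = 1.40202 and all integers i with 3 ≤ i ≤ 7, the inequality α^{-1} + i·α^{-(i+4)} ≤ 1 holds. -/
/-- For `α = 1.40202` and all integers `3 ≤ i ≤ 7`: `α⁻¹ + i·α^(-(i+4)) ≤ 1`. -/
theorem stmt_8 (i : ℕ) (hi : 3 ≤ i) (hi7 : i ≤ 7) :
    1 / (1.40202 : ℝ) + (i : ℝ) / (1.40202 : ℝ) ^ (i + 4) ≤ 1 := by
  interval_cases i <;> norm_num
end

section
/- Let G=(V,E) be a graph with no isolated vertices, and let A⊆V be an independent set such that the closed neighbourhoods {N̄(v): v∈A} are pairwise disjoint and each vertex of A has degree at most Δ. Then the number of irredundant sets in G is at most 2^n · ((2^{Δ+1}−1)/2^{Δ+1})^{|A|}. -/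
open Finset

lemma factor_count {V : Type*} [Fintype V] [DecidableEq V] (B : Finset V)
    (Q P : Finset V → Prop) [DecidablePred Q] [DecidablePred P] :
    (univ.filter fun S : Finset V => Q (S ∩ B) ∧ P (S \ B)).card
      = (B.powerset.filter Q).card *
        (univ.filter fun U : Finset V => U ∩ B = ∅ ∧ P U).card := by
  rw [← Finset.card_product]
  apply Finset.card_bij' (fun S _ => (S ∩ B, S \ B)) (fun p _ => p.1 ∪ p.2)
  · intro S hS
    simp only [mem_filter, mem_univ, true_and] at hS
    simp only [Finset.mem_product, mem_filter, mem_powerset, mem_univ, true_and]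
    exact ⟨⟨inter_subset_right, hS.1⟩, by simp, hS.2⟩
  · rintro ⟨T, U⟩ hp
    simp only [Finset.mem_product, mem_filter, mem_powerset, mem_univ, true_and] at hp
    obtain ⟨⟨hTB, hQ⟩, hUB, hP⟩ := hp
    have h1 : (T ∪ U) ∩ B = T := by
      rw [union_inter_distrib_right, inter_eq_left.mpr hTB, hUB, union_empty]
    have h2 : (T ∪ U) \ B = U := by
      rw [union_sdiff_distrib, sdiff_eq_empty_iff_subset.mpr hTB, empty_union,
        Finset.sdiff_eq_self_iff_disjoint]
      exact Finset.disjoint_left.mpr fun a ha hb => by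
        have := Finset.mem_inter.mpr ⟨ha, hb⟩; rw [hUB] at this; exact absurd this (notMem_empty a)
    simp only [mem_filter, mem_univ, true_and, h1, h2]
    exact ⟨hQ, hP⟩
  · intro S hS
    simp only
    ext x; simp only [Finset.mem_union, Finset.mem_inter, Finset.mem_sdiff]; tauto
  · rintro ⟨T, U⟩ hp
    simp only [Finset.mem_product, mem_filter, mem_powerset, mem_univ, true_and] at hp
    obtain ⟨⟨hTB, hQ⟩, hUB, hP⟩ := hp
    have h1 : (T ∪ U) ∩ B = T := by
      rw [union_inter_distrib_right, inter_eq_left.mpr hTB, hUB, union_empty]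
    have h2 : (T ∪ U) \ B = U := by
      rw [union_sdiff_distrib, sdiff_eq_empty_iff_subset.mpr hTB, empty_union,
        Finset.sdiff_eq_self_iff_disjoint]
      exact Finset.disjoint_left.mpr fun a ha hb => by
        have := Finset.mem_inter.mpr ⟨ha, hb⟩; rw [hUB] at this; exact absurd this (notMem_empty a)
    simp [h1, h2]

lemma count_avoid {V : Type*} [Fintype V] [DecidableEq V] (Δ : ℕ) (B : V → Finset V)
    (hcard : ∀ v, (B v).card ≤ Δ + 1) :
    ∀ A : Finset V, (∀ u ∈ A, ∀ v ∈ A, u ≠ v → Disjoint (B u) (B v)) →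
    ((univ.filter fun S : Finset V => ∀ v ∈ A, ¬ B v ⊆ S).card : ℝ)
      ≤ 2 ^ (Fintype.card V) * ((2 ^ (Δ + 1) - 1 : ℝ) / 2 ^ (Δ + 1)) ^ A.card := by
  intro A
  induction A using Finset.induction_on with
  | empty =>
    intro _
    simp [Finset.filter_true_of_mem, Finset.card_univ]
  | @insert a A ha ih =>
    intro hdisj
    have hdisj' : ∀ u ∈ A, ∀ v ∈ A, u ≠ v → Disjoint (B u) (B v) := fun u hu v hv =>
      hdisj u (mem_insert_of_mem hu) v (mem_insert_of_mem hv)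
    set q : ℝ := ((2 ^ (Δ + 1) - 1 : ℝ) / 2 ^ (Δ + 1)) with hq
    have hq0 : 0 ≤ q := by
      apply div_nonneg _ (by positivity)
      have : (1:ℝ) ≤ 2 ^ (Δ+1) := one_le_pow₀ (by norm_num)
      linarith
    -- equivalence of predicates
    have hsub : ∀ v ∈ A, ∀ S : Finset V, (B v ⊆ S ↔ B v ⊆ S \ B a) := by
      intro v hv S
      constructor
      · intro h
        rw [Finset.subset_sdiff]
        exact ⟨h, (hdisj v (mem_insert_of_mem hv) a (mem_insert_self a A)
          (fun h' => ha (h' ▸ hv))).symm.symm⟩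
      · intro h; exact h.trans (sdiff_subset)
    have key : (univ.filter fun S : Finset V => ∀ v ∈ insert a A, ¬ B v ⊆ S)
        = univ.filter fun S : Finset V =>
            (¬ B a ⊆ S ∩ B a) ∧ ((fun U => ∀ v ∈ A, ¬ B v ⊆ U) (S \ B a)) := by
      apply Finset.filter_congr
      intro S _
      simp only [Finset.mem_insert, forall_eq_or_imp]
      constructor
      · rintro ⟨h1, h2⟩
        refine ⟨fun h => h1 (h.trans inter_subset_left), fun v hv h => h2 v hv ((hsub v hv S).mpr h)⟩
      · rintro ⟨h1, h2⟩
        refine ⟨fun h => h1 (Finset.subset_inter h subset_rfl),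
          fun v hv h => h2 v hv ((hsub v hv S).mp h)⟩
    have key2 : (univ.filter fun S : Finset V => ∀ v ∈ A, ¬ B v ⊆ S)
        = univ.filter fun S : Finset V =>
            (True) ∧ ((fun U => ∀ v ∈ A, ¬ B v ⊆ U) (S \ B a)) := by
      apply Finset.filter_congr
      intro S _
      simp only [true_and]
      constructor
      · intro h v hv hs; exact h v hv ((hsub v hv S).mpr hs)
      · intro h v hv hs; exact h v hv ((hsub v hv S).mp hs)
    set M := (univ.filter fun U : Finset V => U ∩ B a = ∅ ∧ ∀ v ∈ A, ¬ B v ⊆ U).card with hM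
    have e1 : (univ.filter fun S : Finset V => ∀ v ∈ insert a A, ¬ B v ⊆ S).card
        = ((B a).powerset.filter fun T => ¬ B a ⊆ T).card * M := by
      rw [key]; exact factor_count (B a) (fun T => ¬ B a ⊆ T) (fun U => ∀ v ∈ A, ¬ B v ⊆ U)
    have e2 : (univ.filter fun S : Finset V => ∀ v ∈ A, ¬ B v ⊆ S).card
        = 2 ^ (B a).card * M := by
      rw [key2, factor_count (B a) (fun _ => True) (fun U => ∀ v ∈ A, ¬ B v ⊆ U)]
      congr 1
      rw [Finset.filter_true_of_mem (fun _ _ => trivial), Finset.card_powerset]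
    have epow : ((B a).powerset.filter fun T => ¬ B a ⊆ T).card = 2 ^ (B a).card - 1 := by
      have : ((B a).powerset.filter fun T => B a ⊆ T) = {B a} := by
        ext T
        simp only [mem_filter, mem_powerset, mem_singleton]
        constructor
        · rintro ⟨h1, h2⟩; exact subset_antisymm h1 h2
        · rintro rfl; exact ⟨subset_rfl, subset_rfl⟩
      have h2 := Finset.card_filter_add_card_filter_not
        (s := (B a).powerset) (p := fun T => B a ⊆ T)
      rw [this, Finset.card_powerset, Finset.card_singleton] at h2
      omega
    -- numeric bound
    have hk : (B a).card ≤ Δ + 1 := hcard a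
    have hnum : ((2 : ℝ) ^ (B a).card - 1) ≤ q * 2 ^ (B a).card := by
      rw [hq, div_mul_eq_mul_div, le_div_iff₀ (by positivity)]
      have h2k : (2:ℝ) ^ (B a).card ≤ 2 ^ (Δ + 1) :=
        pow_le_pow_right₀ (by norm_num) hk
      have h1 : (1:ℝ) ≤ 2 ^ (B a).card := one_le_pow₀ (by norm_num)
      nlinarith
    have ihA := ih hdisj'
    calc ((univ.filter fun S : Finset V => ∀ v ∈ insert a A, ¬ B v ⊆ S).card : ℝ)
        = ((2 ^ (B a).card - 1 : ℕ) : ℝ) * M := by rw [e1, epow]; push_cast; ring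
      _ = ((2:ℝ) ^ (B a).card - 1) * M := by
          congr 1
          have : (1:ℕ) ≤ 2 ^ (B a).card := Nat.one_le_two_pow
          push_cast [this]; ring
      _ ≤ (q * 2 ^ (B a).card) * M := by
          apply mul_le_mul_of_nonneg_right hnum (by positivity)
      _ = q * ((2 ^ (B a).card * M : ℕ) : ℝ) := by push_cast; ring
      _ = q * ((univ.filter fun S : Finset V => ∀ v ∈ A, ¬ B v ⊆ S).card : ℝ) := by rw [e2]
      _ ≤ q * (2 ^ (Fintype.card V) * q ^ A.card) := by
          exact mul_le_mul_of_nonneg_left ihA hq0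
      _ = 2 ^ (Fintype.card V) * q ^ (insert a A).card := by
          rw [Finset.card_insert_of_notMem ha]; ring

/-- If `G` has no isolated vertices and `A` is an independent set with pairwise
disjoint closed neighbourhoods all of whose vertices have degree at most `Δ`,
then the number of irredundant sets of `G` is at most
`2^n · ((2^(Δ+1) - 1)/2^(Δ+1))^|A|`. -/
theorem stmt_11 {V : Type*} [Fintype V] [DecidableEq V]
    (G : SimpleGraph V) [DecidableRel G.Adj]
    (Δ : ℕ) (hiso : ∀ v : V, 0 < G.degree v)
    (A : Finset V)
    (hdegA : ∀ v ∈ A, G.degree v ≤ Δ)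
    (hind : ∀ u ∈ A, ∀ v ∈ A, ¬ G.Adj u v)
    (hdisj : ∀ u ∈ A, ∀ v ∈ A, u ≠ v →
      Disjoint (insert u (G.neighborFinset u)) (insert v (G.neighborFinset v))) :
    (Nat.card {S : Finset V // ∀ v ∈ S, ∃ u : V, (u = v ∨ G.Adj v u) ∧
        ∀ w ∈ S, w ≠ v → ¬(u = w ∨ G.Adj w u)} : ℝ)
      ≤ 2 ^ (Fintype.card V) * ((2 ^ (Δ + 1) - 1 : ℝ) / 2 ^ (Δ + 1)) ^ A.card := by
  classical
  set P : Finset V → Prop := fun S => ∀ v ∈ S, ∃ u : V, (u = v ∨ G.Adj v u) ∧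
      ∀ w ∈ S, w ≠ v → ¬(u = w ∨ G.Adj w u) with hP
  set B : V → Finset V := fun v => if v ∈ A then insert v (G.neighborFinset v) else ∅ with hB
  have hcard : ∀ v, (B v).card ≤ Δ + 1 := by
    intro v
    by_cases hv : v ∈ A
    · simp only [hB, if_pos hv]
      rw [Finset.card_insert_of_notMem (by simp), G.card_neighborFinset_eq_degree]
      exact Nat.add_le_add_right (hdegA v hv) 1
    · simp [hB, hv]
  have hd : ∀ u ∈ A, ∀ v ∈ A, u ≠ v → Disjoint (B u) (B v) := by
    intro u hu v hv huv
    simp only [hB, if_pos hu, if_pos hv]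
    exact hdisj u hu v hv huv
  have havoid := count_avoid Δ B hcard A hd
  have hsubP : ∀ S : Finset V, P S → ∀ v ∈ A, ¬ B v ⊆ S := by
    intro S hS v hv hsub
    simp only [hB, if_pos hv] at hsub
    have hvS : v ∈ S := hsub (mem_insert_self _ _)
    obtain ⟨u, hu, hpriv⟩ := hS v hvS
    rcases hu with rfl | hadj
    · -- u = v
      obtain ⟨w, hw⟩ := Finset.card_pos.mp (by rw [G.card_neighborFinset_eq_degree]; exact hiso u)
      have hwS : w ∈ S := hsub (mem_insert_of_mem hw)
      have hwv : w ≠ u := fun h => G.irrefl (h ▸ (G.mem_neighborFinset u w).mp hw)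
      exact hpriv w hwS hwv (Or.inr ((G.mem_neighborFinset u w).mp hw).symm)
    · have huS : u ∈ S := hsub (mem_insert_of_mem ((G.mem_neighborFinset v u).mpr hadj))
      have huv : u ≠ v := fun h => G.irrefl (h ▸ hadj)
      exact hpriv u huS huv (Or.inl rfl)
  have hcardeq : (Nat.card {S : Finset V // P S}) = (univ.filter P).card := by
    rw [Nat.card_eq_fintype_card, Fintype.card_subtype]
  have hle : (univ.filter P).card ≤ (univ.filter fun S : Finset V => ∀ v ∈ A, ¬ B v ⊆ S).card := by
    apply Finset.card_le_card
    intro S hS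
    simp only [mem_filter, mem_univ, true_and] at hS ⊢
    exact hsubP S hS
  calc (Nat.card {S : Finset V // P S} : ℝ)
      ≤ ((univ.filter fun S : Finset V => ∀ v ∈ A, ¬ B v ⊆ S).card : ℝ) := by
        rw [hcardeq]; exact_mod_cast hle
    _ ≤ _ := havoid
end

section
/- Let G=(V,E) be a graph on n vertices with no dominating set of size less than (149/300)n. Then there exists a set A⊆V such that: (1) A is an independent set and the closed neighbourhoods {N̄(v): v∈A} are pairwise disjoint; (2) every vertex of A has degree at most 6; (3) |A| ≥ 41n/9800. -/
open Finset

section Aux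

variable {V : Type*} [Fintype V] [DecidableEq V]

private def Nb (G : SimpleGraph V) [DecidableRel G.Adj] (v : V) : Finset V :=
  insert v (G.neighborFinset v)

private lemma card_Nb (G : SimpleGraph V) [DecidableRel G.Adj] (v : V) :
    (Nb G v).card = G.degree v + 1 := by
  rw [Nb, Finset.card_insert_of_notMem (SimpleGraph.notMem_neighborFinset_self G v),
    SimpleGraph.card_neighborFinset_eq_degree]

private lemma mem_Nb_comm (G : SimpleGraph V) [DecidableRel G.Adj] (u x : V) :
    u ∈ Nb G x ↔ x ∈ Nb G u := by
  simp only [Nb, Finset.mem_insert, SimpleGraph.mem_neighborFinset]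
  constructor
  · rintro (h | h)
    · exact Or.inl h.symm
    · exact Or.inr h.symm
  · rintro (h | h)
    · exact Or.inl h.symm
    · exact Or.inr h.symm

/-- Greedy bound function. -/
private noncomputable def Fb (n u : ℕ) : ℝ :=
  if 8 * u ≤ n then (u : ℝ)
  else if 4 * u ≤ n then (u : ℝ) / 2 + (n : ℝ) / 16
  else (u : ℝ) / 3 + 5 * (n : ℝ) / 48

private lemma Fb_le_third (n u : ℕ) : Fb n u ≤ (u : ℝ) / 3 + 5 * (n : ℝ) / 48 := by
  unfold Fb
  split_ifs with h1 h2
  · have h : (8 : ℝ) * u ≤ n := by exact_mod_cast h1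
    linarith
  · have h : (4 : ℝ) * u ≤ n := by exact_mod_cast h2
    linarith
  · linarith

private lemma Fb_le_half (n u : ℕ) (h : 4 * u ≤ n) : Fb n u ≤ (u : ℝ) / 2 + (n : ℝ) / 16 := by
  unfold Fb
  by_cases h1 : 8 * u ≤ n
  · rw [if_pos h1]
    have h' : (8 : ℝ) * u ≤ n := by exact_mod_cast h1
    linarith
  · rw [if_neg h1, if_pos h]

/-- Double counting: total coverage of `U` by closed neighbourhoods. -/
private lemma sum_cover (G : SimpleGraph V) [DecidableRel G.Adj] (U : Finset V) :
    ∑ x : V, ((Nb G x) ∩ U).card = ∑ u ∈ U, (G.degree u + 1) := by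
  have h1 : ∀ x : V, ((Nb G x) ∩ U).card = ∑ u ∈ U, if u ∈ Nb G x then 1 else 0 := by
    intro x
    rw [Finset.inter_comm, ← Finset.filter_mem_eq_inter, Finset.card_filter]
  simp_rw [h1]
  rw [Finset.sum_comm]
  refine Finset.sum_congr rfl ?_
  intro u _
  have h2 : ∀ x : V, (if u ∈ Nb G x then 1 else 0) = (if x ∈ Nb G u then 1 else 0) := by
    intro x
    simp [mem_Nb_comm]
  simp_rw [h2]
  rw [← Finset.card_filter, Finset.filter_mem_eq_inter, Finset.univ_inter, card_Nb]

/-- Pigeonhole: if total coverage exceeds `c * n`, some vertex covers `≥ c+1`. -/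
private lemma exists_big_cover (G : SimpleGraph V) [DecidableRel G.Adj] (U : Finset V)
    (hU : ∀ v ∈ U, 7 ≤ G.degree v) (c : ℕ) (hc : c * Fintype.card V < 8 * U.card) :
    ∃ x : V, c + 1 ≤ ((Nb G x) ∩ U).card := by
  by_contra h
  push_neg at h
  have hle : ∀ x : V, ((Nb G x) ∩ U).card ≤ c := fun x => Nat.lt_succ_iff.mp (h x)
  have h1 : ∑ x : V, ((Nb G x) ∩ U).card ≤ c * Fintype.card V := by
    calc ∑ x : V, ((Nb G x) ∩ U).card ≤ ∑ _x : V, c := Finset.sum_le_sum fun x _ => hle x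
      _ = Fintype.card V * c := by rw [Finset.sum_const, Finset.card_univ, smul_eq_mul]
      _ = c * Fintype.card V := Nat.mul_comm _ _
  have h2 : 8 * U.card ≤ ∑ x : V, ((Nb G x) ∩ U).card := by
    rw [sum_cover]
    calc 8 * U.card = ∑ _u ∈ U, 8 := by rw [Finset.sum_const, smul_eq_mul, Nat.mul_comm]
      _ ≤ ∑ u ∈ U, (G.degree u + 1) := Finset.sum_le_sum fun u hu => by
            have := hU u hu; omega
  omega

/-- Greedy construction of a small set dominating a set of vertices all of degree ≥ 7. -/
private lemma greedy (G : SimpleGraph V) [DecidableRel G.Adj] :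
    ∀ (m : ℕ) (U : Finset V), U.card = m → (∀ v ∈ U, 7 ≤ G.degree v) →
    ∃ D : Finset V, (∀ v ∈ U, v ∈ D ∨ ∃ u ∈ D, G.Adj u v) ∧
      (D.card : ℝ) ≤ Fb (Fintype.card V) m := by
  intro m
  induction m using Nat.strong_induction_on with
  | _ m ih =>
    intro U hcard hdeg
    set n := Fintype.card V with hn
    by_cases h1 : 8 * m ≤ n
    · refine ⟨U, fun v hv => Or.inl hv, ?_⟩
      rw [hcard]
      unfold Fb
      rw [if_pos h1]
    · by_cases h2 : 4 * m ≤ n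
      · obtain ⟨x, hx⟩ := exists_big_cover G U hdeg 1 (by omega)
        set U' := U \ Nb G x with hU'
        have hsplit : ((Nb G x) ∩ U).card + U'.card = m := by
          rw [hU', Finset.inter_comm, ← hcard]
          exact Finset.card_inter_add_card_sdiff U (Nb G x)
        have hlt : U'.card < m := by omega
        obtain ⟨D', hD'dom, hD'card⟩ := ih U'.card hlt U' rfl
          (fun v hv => hdeg v (Finset.mem_sdiff.mp hv).1)
        refine ⟨insert x D', ?_, ?_⟩
        · intro v hv
          by_cases hvx : v ∈ Nb G x
          · rcases Finset.mem_insert.mp hvx with h | h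
            · exact Or.inl (h ▸ Finset.mem_insert_self x D')
            · exact Or.inr ⟨x, Finset.mem_insert_self x D',
                (SimpleGraph.mem_neighborFinset G x v).mp h⟩
          · rcases hD'dom v (Finset.mem_sdiff.mpr ⟨hv, hvx⟩) with h | ⟨u, hu, hadj⟩
            · exact Or.inl (Finset.mem_insert_of_mem h)
            · exact Or.inr ⟨u, Finset.mem_insert_of_mem hu, hadj⟩
        · have hc1 : (insert x D').card ≤ D'.card + 1 := Finset.card_insert_le x D'
          have hc2 : Fb n U'.card ≤ (U'.card : ℝ) / 2 + (n : ℝ) / 16 :=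
            Fb_le_half n U'.card (by omega)
          have hc3 : (U'.card : ℝ) ≤ (m : ℝ) - 2 := by
            have : U'.card + 2 ≤ m := by omega
            have := (Nat.cast_le (α := ℝ)).mpr this
            push_cast at this ⊢
            linarith
          have hgoal : Fb n m = (m : ℝ) / 2 + (n : ℝ) / 16 := by
            unfold Fb; rw [if_neg h1, if_pos h2]
          rw [hgoal]
          have : ((insert x D').card : ℝ) ≤ (D'.card : ℝ) + 1 := by exact_mod_cast hc1
          linarith
      · obtain ⟨x, hx⟩ := exists_big_cover G U hdeg 2 (by omega)
        set U' := U \ Nb G x with hU'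
        have hsplit : ((Nb G x) ∩ U).card + U'.card = m := by
          rw [hU', Finset.inter_comm, ← hcard]
          exact Finset.card_inter_add_card_sdiff U (Nb G x)
        have hlt : U'.card < m := by omega
        obtain ⟨D', hD'dom, hD'card⟩ := ih U'.card hlt U' rfl
          (fun v hv => hdeg v (Finset.mem_sdiff.mp hv).1)
        refine ⟨insert x D', ?_, ?_⟩
        · intro v hv
          by_cases hvx : v ∈ Nb G x
          · rcases Finset.mem_insert.mp hvx with h | h
            · exact Or.inl (h ▸ Finset.mem_insert_self x D')
            · exact Or.inr ⟨x, Finset.mem_insert_self x D',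
                (SimpleGraph.mem_neighborFinset G x v).mp h⟩
          · rcases hD'dom v (Finset.mem_sdiff.mpr ⟨hv, hvx⟩) with h | ⟨u, hu, hadj⟩
            · exact Or.inl (Finset.mem_insert_of_mem h)
            · exact Or.inr ⟨u, Finset.mem_insert_of_mem hu, hadj⟩
        · have hc1 : (insert x D').card ≤ D'.card + 1 := Finset.card_insert_le x D'
          have hc2 : Fb n U'.card ≤ (U'.card : ℝ) / 3 + 5 * (n : ℝ) / 48 :=
            Fb_le_third n U'.card
          have hc3 : (U'.card : ℝ) ≤ (m : ℝ) - 3 := by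
            have : U'.card + 3 ≤ m := by omega
            have := (Nat.cast_le (α := ℝ)).mpr this
            push_cast at this ⊢
            linarith
          have hgoal : Fb n m = (m : ℝ) / 3 + 5 * (n : ℝ) / 48 := by
            unfold Fb; rw [if_neg h1, if_neg h2]
          rw [hgoal]
          have : ((insert x D').card : ℝ) ≤ (D'.card : ℝ) + 1 := by exact_mod_cast hc1
          linarith

end Aux

/-- If `G` on `n` vertices has no dominating set of size less than `(149/300)n`,
then there is a set `A` which is independent with pairwise disjoint closed
neighbourhoods, all of its vertices have degree at most 6, and `|A| ≥ 41n/9800`. -/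
theorem stmt_12 {V : Type*} [Fintype V] [DecidableEq V]
    (G : SimpleGraph V) [DecidableRel G.Adj]
    (hdom : ∀ D : Finset V, (∀ v : V, v ∈ D ∨ ∃ u ∈ D, G.Adj u v) →
      (149 : ℝ) / 300 * Fintype.card V ≤ D.card) :
    ∃ A : Finset V,
      (∀ u ∈ A, ∀ v ∈ A, ¬ G.Adj u v) ∧
      (∀ u ∈ A, ∀ v ∈ A, u ≠ v →
        Disjoint (insert u (G.neighborFinset u)) (insert v (G.neighborFinset v))) ∧
      (∀ v ∈ A, G.degree v ≤ 6) ∧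
      (41 : ℝ) * Fintype.card V / 9800 ≤ A.card := by
  classical
  set n := Fintype.card V with hn
  -- maximal packing among low-degree vertices
  set P : Finset V → Prop := fun A => (∀ v ∈ A, G.degree v ≤ 6) ∧
    ∀ u ∈ A, ∀ v ∈ A, u ≠ v → Disjoint (Nb G u) (Nb G v) with hP
  have hne : (Finset.univ.powerset.filter P).Nonempty := by
    refine ⟨∅, Finset.mem_filter.mpr ⟨Finset.mem_powerset.mpr (Finset.empty_subset _), ?_⟩⟩
    constructor
    · intro v hv; exact absurd hv (Finset.notMem_empty v)
    · intro u hu; exact absurd hu (Finset.notMem_empty u)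
  obtain ⟨A, hAmem, hAmax⟩ := Finset.exists_max_image (Finset.univ.powerset.filter P)
    Finset.card hne
  have hA : P A := (Finset.mem_filter.mp hAmem).2
  -- maximality: every low-degree vertex's closed neighbourhood meets N̄(A)
  have hmax : ∀ s : V, G.degree s ≤ 6 → ∃ a ∈ A, ¬ Disjoint (Nb G s) (Nb G a) := by
    intro s hs
    by_contra hcon
    push_neg at hcon
    have hsA : s ∉ A := by
      intro hsA
      have hself : s ∈ Nb G s := Finset.mem_insert_self s (G.neighborFinset s)
      exact (Finset.disjoint_left.mp (hcon s hsA) hself) hself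
    have hins : P (insert s A) := by
      constructor
      · intro v hv
        rcases Finset.mem_insert.mp hv with h | h
        · exact h ▸ hs
        · exact hA.1 v h
      · intro u hu v hv huv
        rcases Finset.mem_insert.mp hu with h | h <;> rcases Finset.mem_insert.mp hv with h' | h'
        · exact absurd (h.trans h'.symm) huv
        · exact h ▸ hcon v h'
        · exact h' ▸ (hcon u h).symm
        · exact hA.2 u h v h' huv
    have hmem : insert s A ∈ Finset.univ.powerset.filter P :=
      Finset.mem_filter.mpr ⟨Finset.mem_powerset.mpr (Finset.subset_univ _), hins⟩
    have hle := hAmax (insert s A) hmem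
    rw [Finset.card_insert_of_notMem hsA] at hle
    omega
  -- N̄(A)
  set NA : Finset V := A.biUnion (Nb G) with hNA
  have hNAcard : NA.card ≤ 7 * A.card := by
    calc NA.card ≤ ∑ a ∈ A, (Nb G a).card := Finset.card_biUnion_le
      _ ≤ ∑ _a ∈ A, 7 := Finset.sum_le_sum fun a ha => by
          rw [card_Nb]; have := hA.1 a ha; omega
      _ = 7 * A.card := by rw [Finset.sum_const, smul_eq_mul, Nat.mul_comm]
  -- dominate high-degree vertices greedily
  set T : Finset V := Finset.univ.filter (fun v => 7 ≤ G.degree v) with hT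
  obtain ⟨DT, hDTdom, hDTcard⟩ := greedy G T.card T rfl
    (fun v hv => (Finset.mem_filter.mp hv).2)
  have hTn : T.card ≤ n := by
    rw [hn, ← Finset.card_univ]; exact Finset.card_filter_le _ _
  have hDTbound : (DT.card : ℝ) ≤ 7 * (n : ℝ) / 16 := by
    have h1 := hDTcard.trans (Fb_le_third n T.card)
    have h2 : (T.card : ℝ) ≤ (n : ℝ) := by exact_mod_cast hTn
    linarith
  -- the dominating set
  set D : Finset V := NA ∪ DT with hD
  have hdomD : ∀ v : V, v ∈ D ∨ ∃ u ∈ D, G.Adj u v := by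
    intro v
    rcases le_or_gt (G.degree v) 6 with hv | hv
    · obtain ⟨a, ha, hnd⟩ := hmax v hv
      obtain ⟨x, hx1, hx2⟩ := Finset.not_disjoint_iff.mp hnd
      have hxD : x ∈ D := Finset.mem_union_left _ (Finset.mem_biUnion.mpr ⟨a, ha, hx2⟩)
      rcases Finset.mem_insert.mp hx1 with h | h
      · exact Or.inl (h ▸ hxD)
      · exact Or.inr ⟨x, hxD, ((SimpleGraph.mem_neighborFinset G v x).mp h).symm⟩
    · have hvT : v ∈ T := Finset.mem_filter.mpr ⟨Finset.mem_univ v, hv⟩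
      rcases hDTdom v hvT with h | ⟨u, hu, hadj⟩
      · exact Or.inl (Finset.mem_union_right _ h)
      · exact Or.inr ⟨u, Finset.mem_union_right _ hu, hadj⟩
  have hbound := hdom D hdomD
  have hDcard : (D.card : ℝ) ≤ 7 * (A.card : ℝ) + 7 * (n : ℝ) / 16 := by
    have h1 : D.card ≤ NA.card + DT.card := Finset.card_union_le _ _
    have h2 : (NA.card : ℝ) ≤ 7 * (A.card : ℝ) := by exact_mod_cast hNAcard
    have h3 : (D.card : ℝ) ≤ (NA.card : ℝ) + (DT.card : ℝ) := by exact_mod_cast h1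
    linarith
  have hnn : (0 : ℝ) ≤ (n : ℝ) := Nat.cast_nonneg n
  refine ⟨A, ?_, ?_, hA.1, ?_⟩
  · intro u hu v hv hadj
    by_cases huv : u = v
    · exact G.irrefl (huv ▸ hadj)
    · have hdisj := hA.2 u hu v hv huv
      have hu1 : u ∈ Nb G u := Finset.mem_insert_self u _
      have hu2 : u ∈ Nb G v := Finset.mem_insert_of_mem
        ((SimpleGraph.mem_neighborFinset G v u).mpr hadj.symm)
      exact (Finset.disjoint_left.mp hdisj hu1) hu2
  · exact hA.2
  · have : (149 : ℝ) / 300 * (n : ℝ) ≤ 7 * (A.card : ℝ) + 7 * (n : ℝ) / 16 :=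
      le_trans hbound hDcard
    linarith
end

section
/- Let G be a graph on n vertices with no dominating set of size < (149/300)n. Suppose D⊆V is constructed greedily so that |D| ≤ (1/3)|N̄(D)|, let A₁ = V∖N̄(D), and let A₂ be an inclusion-maximal independent set in G[A₁] (where G[A₁] has max degree ≤1). Then D∪A₂ dominates G, and |A₂| ≥ (49/200)n. -/
open Finset

/-- If `G` has no dominating set of size `< (149/300)n`, `D` satisfies
`|D| ≤ |N̄(D)|/3`, `A₁ = V ∖ N̄(D)` induces a graph of maximum degree ≤ 1 and
`A₂` is an inclusion-maximal independent set in `G[A₁]`, then `D ∪ A₂` is a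
dominating set of `G` and `|A₂| ≥ (49/200)n`. -/
theorem stmt_14 {V : Type*} [Fintype V] [DecidableEq V]
    (G : SimpleGraph V) [DecidableRel G.Adj]
    (hdom : ∀ D : Finset V, (∀ v : V, v ∈ D ∨ ∃ u ∈ D, G.Adj u v) →
      (149 : ℝ) / 300 * Fintype.card V ≤ D.card)
    (D A₁ A₂ : Finset V)
    (hA₁ : A₁ = univ \ D.biUnion (fun d => insert d (G.neighborFinset d)))
    (hD : 3 * D.card ≤ (D.biUnion (fun d => insert d (G.neighborFinset d))).card)
    (hmaxdeg : ∀ v ∈ A₁, (A₁.filter (fun u => G.Adj v u)).card ≤ 1)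
    (hA₂sub : A₂ ⊆ A₁)
    (hA₂ind : ∀ u ∈ A₂, ∀ v ∈ A₂, ¬ G.Adj u v)
    (hA₂max : ∀ v ∈ A₁, v ∉ A₂ → ∃ u ∈ A₂, G.Adj u v) :
    (∀ v : V, v ∈ D ∪ A₂ ∨ ∃ u ∈ D ∪ A₂, G.Adj u v) ∧
    (49 : ℝ) / 200 * Fintype.card V ≤ A₂.card := by
  set N := D.biUnion (fun d => insert d (G.neighborFinset d)) with hN
  have hdomset : ∀ v : V, v ∈ D ∪ A₂ ∨ ∃ u ∈ D ∪ A₂, G.Adj u v := by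
    intro v
    by_cases hv : v ∈ N
    · rw [hN, mem_biUnion] at hv
      obtain ⟨d, hd, hvd⟩ := hv
      rcases mem_insert.mp hvd with h | h
      · left; exact mem_union.mpr (Or.inl (h ▸ hd))
      · right; exact ⟨d, mem_union.mpr (Or.inl hd), (G.mem_neighborFinset d v).mp h⟩
    · have hvA₁ : v ∈ A₁ := by rw [hA₁]; exact mem_sdiff.mpr ⟨mem_univ v, hv⟩
      by_cases hv2 : v ∈ A₂
      · left; exact mem_union.mpr (Or.inr hv2)
      · obtain ⟨u, hu, hadj⟩ := hA₂max v hvA₁ hv2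
        exact Or.inr ⟨u, mem_union.mpr (Or.inr hu), hadj⟩
  refine ⟨hdomset, ?_⟩
  have h1 := hdom (D ∪ A₂) hdomset
  have h2 : (D ∪ A₂).card ≤ D.card + A₂.card := card_union_le _ _
  have h3 : A₁.card = Fintype.card V - N.card := by
    rw [hA₁, card_sdiff_of_subset (subset_univ N), card_univ]
  have h4 : A₂.card ≤ A₁.card := card_le_card hA₂sub
  have h5 : N.card ≤ Fintype.card V := le_trans (card_le_card (subset_univ N)) card_univ.le
  have h6 : 3 * D.card + A₁.card ≤ Fintype.card V := by omega
  have h7 : (3 : ℝ) * D.card + A₁.card ≤ Fintype.card V := by exact_mod_cast h6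
  have h2' : ((D ∪ A₂).card : ℝ) ≤ (D.card : ℝ) + A₂.card := by exact_mod_cast h2
  have h4' : (A₂.card : ℝ) ≤ A₁.card := by exact_mod_cast h4
  linarith
end
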